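/- Every Nekrasov matrix A = [a_{ij}] ∈ C^{n×n} is nonsingular (invertible). -/
import Mathlib


open Finset

noncomputable def nekH {n : ℕ} {𝕜 : Type*} [RCLike 𝕜] (A : Matrix (Fin n) (Fin n) 𝕜) : Fin n → ℝ
  | i =>
    (∑ j : Fin n, if h : j < i then ‖A i j‖ / ‖A j j‖ * nekH A j else 0)
      + ∑ j : Fin n, if i < j then ‖A i j‖ else 0
termination_by i => i.val
decreasing_by exact h

def IsNekrasov {n : ℕ} {𝕜 : Type*} [RCLike 𝕜] (A : Matrix (Fin n) (Fin n) 𝕜) : Prop :=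
  ∀ i, nekH A i < ‖A i i‖

noncomputable def nekZ {n : ℕ} {𝕜 : Type*} [RCLike 𝕜] (A : Matrix (Fin n) (Fin n) 𝕜) : Fin n → ℝ
  | i => (∑ j : Fin n, if h : j < i then ‖A i j‖ / ‖A j j‖ * nekZ A j else 0) + 1
termination_by i => i.val
decreasing_by exact h

noncomputable def nekEta {n : ℕ} {𝕜 : Type*} [RCLike 𝕜] (M : Matrix (Fin n) (Fin n) 𝕜) : Fin n → ℝ
  | i => (∑ j : Fin n, if h : j < i then ‖M i j‖ / min ‖M j j‖ 1 * nekEta M j else 0) + 1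
termination_by i => i.val
decreasing_by exact h

noncomputable def linftyNorm {n : ℕ} {𝕜 : Type*} [RCLike 𝕜] (A : Matrix (Fin n) (Fin n) 𝕜) : ℝ :=
  ⨆ i, ∑ j, ‖A i j‖

noncomputable def rPlus {n : ℕ} (M : Matrix (Fin n) (Fin n) ℝ) (i : Fin n) : ℝ :=
  Finset.fold max 0 (fun j => M i j) (Finset.univ.erase i)

noncomputable def BPlus {n : ℕ} (M : Matrix (Fin n) (Fin n) ℝ) : Matrix (Fin n) (Fin n) ℝ :=
  Matrix.of fun i j => M i j - rPlus M i

def IsBNekrasov {n : ℕ} (M : Matrix (Fin n) (Fin n) ℝ) : Prop :=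
  IsNekrasov (BPlus M) ∧ ∀ i, 0 < BPlus M i i

def IsLCPSolution {n : ℕ} (M : Matrix (Fin n) (Fin n) ℝ) (q x : Fin n → ℝ) : Prop :=
  (∀ i, 0 ≤ x i) ∧ (∀ i, 0 ≤ (M.mulVec x + q) i) ∧ ∑ i, (M.mulVec x + q) i * x i = 0

def IsPMatrix {n : ℕ} (M : Matrix (Fin n) (Fin n) ℝ) : Prop :=
  ∀ S : Finset (Fin n), 0 < (M.submatrix (fun i : S => (i : Fin n)) (fun j : S => (j : Fin n))).det



lemma nekH_nonneg {n : ℕ} {𝕜 : Type*} [RCLike 𝕜] (A : Matrix (Fin n) (Fin n) 𝕜) :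
    ∀ i, 0 ≤ nekH A i := by
  suffices h : ∀ k : ℕ, ∀ i : Fin n, i.val = k → 0 ≤ nekH A i by
    intro i; exact h i.val i rfl
  intro k
  induction k using Nat.strong_induction_on with
  | _ k ih =>
    intro i hik
    rw [nekH]
    apply add_nonneg
    · apply Finset.sum_nonneg
      intro j _
      split
      · next hj =>
        exact mul_nonneg (div_nonneg (norm_nonneg _) (norm_nonneg _))
          (ih j.val (hik ▸ hj) j rfl)
      · exact le_refl 0
    · apply Finset.sum_nonneg
      intro j _
      split
      · exact norm_nonneg _
      · exact le_refl 0

theorem stmt6 {n : ℕ} (A : Matrix (Fin n) (Fin n) ℂ) (hA : IsNekrasov A) :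
    IsUnit A.det := by
  have hdiag : ∀ i, 0 < ‖A i i‖ := fun i => lt_of_le_of_lt (nekH_nonneg A i) (hA i)
  by_contra hdet
  have hdet0 : A.det = 0 := by
    by_contra h
    exact hdet (isUnit_iff_ne_zero.mpr h)
  obtain ⟨x, hx, hAx⟩ := (Matrix.exists_mulVec_eq_zero_iff).mpr hdet0
  -- n > 0 since x ≠ 0
  have hne : Nonempty (Fin n) := by
    rcases Nat.eq_zero_or_pos n with h0 | hpos
    · exfalso; apply hx; funext i; exact absurd i.isLt (by omega)
    · exact ⟨⟨0, hpos⟩⟩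
  set m : ℝ := Finset.univ.sup' (Finset.univ_nonempty) (fun j => ‖x j‖) with hm
  have hmle : ∀ j, ‖x j‖ ≤ m := fun j => Finset.le_sup' (fun j => ‖x j‖) (Finset.mem_univ j)
  have hmpos : 0 < m := by
    by_contra h
    push_neg at h
    apply hx
    funext j
    have := hmle j
    have : ‖x j‖ ≤ 0 := le_trans this h
    simpa using le_antisymm this (norm_nonneg _)
  -- key estimate
  have key : ∀ i, ‖A i i‖ * ‖x i‖ ≤ nekH A i * m := by
    suffices h : ∀ k : ℕ, ∀ i : Fin n, i.val = k → ‖A i i‖ * ‖x i‖ ≤ nekH A i * m by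
      intro i; exact h i.val i rfl
    intro k
    induction k using Nat.strong_induction_on with
    | _ k ih =>
      intro i hik
      have hrow : ∑ j, A i j * x j = 0 := by
        simpa [Matrix.mulVec, dotProduct] using congrFun hAx i
      have hrow' : A i i * x i = -∑ j ∈ Finset.univ.erase i, A i j * x j := by
        have h1 := Finset.add_sum_erase Finset.univ (fun j => A i j * x j) (Finset.mem_univ i)
        have h2 : A i i * x i + ∑ j ∈ Finset.univ.erase i, A i j * x j = 0 := by
          rw [h1]; exact hrow
        linear_combination h2
      have step1 : ‖A i i‖ * ‖x i‖ ≤ ∑ j ∈ Finset.univ.erase i, ‖A i j‖ * ‖x j‖ := by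
        calc ‖A i i‖ * ‖x i‖ = ‖A i i * x i‖ := (norm_mul _ _).symm
        _ = ‖∑ j ∈ Finset.univ.erase i, A i j * x j‖ := by rw [hrow', norm_neg]
        _ ≤ ∑ j ∈ Finset.univ.erase i, ‖A i j * x j‖ := norm_sum_le _ _
        _ = ∑ j ∈ Finset.univ.erase i, ‖A i j‖ * ‖x j‖ := by
            apply Finset.sum_congr rfl; intro j _; exact norm_mul _ _
      have step2 : ∑ j ∈ Finset.univ.erase i, ‖A i j‖ * ‖x j‖ ≤
          ∑ j ∈ Finset.univ.erase i,
            (if j < i then ‖A i j‖ / ‖A j j‖ * nekH A j else ‖A i j‖) * m := by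
        apply Finset.sum_le_sum
        intro j hj
        by_cases hji : j < i
        · simp only [if_pos hji]
          have hAjj : ‖A j j‖ ≠ 0 := ne_of_gt (hdiag j)
          have hIH : ‖A j j‖ * ‖x j‖ ≤ nekH A j * m := ih j.val (hik ▸ hji) j rfl
          have hxj : ‖x j‖ ≤ nekH A j / ‖A j j‖ * m := by
            rw [div_mul_eq_mul_div, le_div_iff₀ (hdiag j)]
            linarith [hIH]
          calc ‖A i j‖ * ‖x j‖ ≤ ‖A i j‖ * (nekH A j / ‖A j j‖ * m) :=
                mul_le_mul_of_nonneg_left hxj (norm_nonneg _)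
          _ = ‖A i j‖ / ‖A j j‖ * nekH A j * m := by ring
        · simp only [if_neg hji]
          exact mul_le_mul_of_nonneg_left (hmle j) (norm_nonneg _)
      have step3 : ∑ j ∈ Finset.univ.erase i,
          (if j < i then ‖A i j‖ / ‖A j j‖ * nekH A j else ‖A i j‖) * m = nekH A i * m := by
        rw [← Finset.sum_mul]
        congr 1
        rw [nekH, ← Finset.sum_add_distrib]
        rw [← Finset.add_sum_erase Finset.univ _ (Finset.mem_univ i)]
        rw [dif_neg (lt_irrefl i), if_neg (lt_irrefl i), add_zero, zero_add]
        apply Finset.sum_congr rfl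
        intro j hj
        have hji : j ≠ i := Finset.ne_of_mem_erase hj
        by_cases h : j < i
        · rw [if_pos h, dif_pos h, if_neg (not_lt_of_gt h), add_zero]
        · have h2 : i < j := lt_of_le_of_ne (not_lt.mp h) (Ne.symm hji)
          rw [if_neg h, dif_neg h, if_pos h2, zero_add]
      exact le_trans step1 (le_trans step2 (le_of_eq step3))
  -- contradiction at the max index
  obtain ⟨i0, -, hi0⟩ := Finset.exists_mem_eq_sup' (Finset.univ_nonempty (α := Fin n))
    (fun j => ‖x j‖)
  have h1 : ‖A i0 i0‖ * m ≤ nekH A i0 * m := by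
    have := key i0
    rwa [hm, hi0] at this ⊢
  have h2 : nekH A i0 * m < ‖A i0 i0‖ * m := by
    exact mul_lt_mul_of_pos_right (hA i0) hmpos
  linarith
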